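/- arXiv:2402.06670 — 2 statements merged into one kernel-verified Lean document; each statement's English description precedes it below -/
import Mathlib

section
/- For real numbers l, a, b with 0 < b ≤ a and √(a² + b²) < l, the integral ∫_{0}^{π} min(a, l·|cos φ|)·min(b, l·sin φ) dφ equals 2la·(1 − √(1 − b²/l²)) + 2lb·(1 − √(1 − a²/l²)) + 2ab·(arccos(a/l) − arcsin(b/l)). -/
/-!
The integrand is invariant under `φ ↦ π - φ`, so it suffices to integrate over `[0, π/2]`.
There, with `α = arcsin (b / l)` and `β = arccos (a / l)`, the integrand equals `a · l sin φ`
on `[0, α]`, the constant `a b` on `[α, β]` and `l cos φ · b` on `[β, π/2]`; the condition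
`a² + b² ≤ l²` is what makes `α ≤ β`.
-/

open Real MeasureTheory Filter

/-- `A(l,a) = ∫_0^π min(a, l·|cos φ|) dφ` -/
noncomputable def A2 (l a : ℝ) : ℝ := ∫ φ in (0:ℝ)..π, min a (l * |Real.cos φ|)

/-- `B(l,b) = ∫_0^π min(b, l·sin φ) dφ` -/
noncomputable def B2 (l b : ℝ) : ℝ := ∫ φ in (0:ℝ)..π, min b (l * Real.sin φ)

/-- `AB(l,a,b) = ∫_0^π min(a, l·|cos φ|)·min(b, l·sin φ) dφ` -/
noncomputable def AB2 (l a b : ℝ) : ℝ :=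
  ∫ φ in (0:ℝ)..π, min a (l * |Real.cos φ|) * min b (l * Real.sin φ)

/-- Intersection probability for the 2D Buffon–Laplace needle problem. -/
noncomputable def P2 (l a b : ℝ) : ℝ :=
  (b * A2 l a + a * B2 l b - AB2 l a b) / (π * a * b)

/-- Intersection probability for the 2D spherocylinder Buffon–Laplace problem. -/
noncomputable def P2sc (l σ a b : ℝ) : ℝ :=
  ((b - σ) * A2 l (a - σ) + (a - σ) * B2 l (b - σ) - AB2 l (a - σ) (b - σ)
    + (σ * a + σ * b - σ ^ 2) * π) / (π * a * b)

/-- `A³ᴰ(l,a) = ∫_0^{π/2} ∫_0^π min(a, l·sin ψ·|cos φ|) dφ dψ` -/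
noncomputable def A3 (l a : ℝ) : ℝ :=
  ∫ ψ in (0:ℝ)..(π/2), ∫ φ in (0:ℝ)..π, min a (l * Real.sin ψ * |Real.cos φ|)

/-- `B³ᴰ(l,b) = ∫_0^{π/2} ∫_0^π min(b, l·sin ψ·sin φ) dφ dψ` -/
noncomputable def B3 (l b : ℝ) : ℝ :=
  ∫ ψ in (0:ℝ)..(π/2), ∫ φ in (0:ℝ)..π, min b (l * Real.sin ψ * Real.sin φ)

/-- `AB³ᴰ(l,a,b) = ∫_0^{π/2} ∫_0^π min(a, l·sin ψ·|cos φ|)·min(b, l·sin ψ·sin φ) dφ dψ` -/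
noncomputable def AB3 (l a b : ℝ) : ℝ :=
  ∫ ψ in (0:ℝ)..(π/2), ∫ φ in (0:ℝ)..π,
    min a (l * Real.sin ψ * |Real.cos φ|) * min b (l * Real.sin ψ * Real.sin φ)

/-- `S³ᴰ(l,a,b) = b·A³ᴰ(l,a) + a·B³ᴰ(l,b) − AB³ᴰ(l,a,b)` -/
noncomputable def S3 (l a b : ℝ) : ℝ := b * A3 l a + a * B3 l b - AB3 l a b

/-- `F(α,β,t) = ∫_α^β √(sin²ψ − t²) dψ` -/
noncomputable def Faux (α β t : ℝ) : ℝ :=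
  ∫ ψ in α..β, Real.sqrt (Real.sin ψ ^ 2 - t ^ 2)

/-- `G(α,β,t) = ∫_α^β (π/2 − arcsin(t / sin ψ)) dψ` -/
noncomputable def Gaux (α β t : ℝ) : ℝ :=
  ∫ ψ in α..β, (π / 2 - Real.arcsin (t / Real.sin ψ))

open Set intervalIntegral

theorem intervalIntegral.integral_eq_two_mul_integral_half_of_symm {f : ℝ → ℝ} {c : ℝ}
    (hf : IntervalIntegrable f volume 0 c) (hsymm : ∀ x, f (c - x) = f x) :
    ∫ x in 0..c, f x = 2 * ∫ x in 0..c / 2, f x := by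
  have hmid : c / 2 ∈ uIcc 0 c := by
    rcases le_total 0 c with hc | hc
    · rw [uIcc_of_le hc]; constructor <;> linarith
    · rw [uIcc_of_ge hc]; constructor <;> linarith
  have hsecond : ∫ x in c / 2..c, f x = ∫ x in 0..c / 2, f x := by
    calc ∫ x in c / 2..c, f x = ∫ x in c / 2..c, f (c - x) := by simp only [hsymm]
      _ = ∫ x in 0..c / 2, f x := by
        rw [integral_comp_sub_left, sub_self, show c - c / 2 = c / 2 by ring]
  rw [← integral_add_adjacent_intervals (hf.mono_set (uIcc_subset_uIcc_left hmid))
    (hf.mono_set (uIcc_subset_uIcc_right hmid)), hsecond, two_mul]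

namespace Real

theorem le_cos_of_le_arccos {x φ : ℝ} (hx₁ : -1 ≤ x) (hx₂ : x ≤ 1) (hφ₀ : 0 ≤ φ)
    (hφ : φ ≤ arccos x) : x ≤ cos φ := by
  simpa only [cos_arccos hx₁ hx₂] using cos_le_cos_of_nonneg_of_le_pi hφ₀ (arccos_le_pi x) hφ

theorem cos_le_of_arccos_le {x φ : ℝ} (hx₁ : -1 ≤ x) (hx₂ : x ≤ 1) (hφ : arccos x ≤ φ)
    (hφπ : φ ≤ π) : cos φ ≤ x := by
  simpa only [cos_arccos hx₁ hx₂] using cos_le_cos_of_nonneg_of_le_pi (arccos_nonneg x) hφπ hφ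

theorem arcsin_le_arccos_of_sq_add_sq_le {x y : ℝ} (hx : 0 ≤ x)
    (hxy : x ^ 2 + y ^ 2 ≤ 1) : arcsin y ≤ arccos x := by
  rw [arccos_eq_arcsin hx]
  exact arcsin_le_arcsin (le_sqrt_of_sq_le (by linarith))

end Real

noncomputable def crossingIntegrand (l a b φ : ℝ) : ℝ :=
  min a (l * |cos φ|) * min b (l * sin φ)

theorem continuous_crossingIntegrand (l a b : ℝ) : Continuous (crossingIntegrand l a b) := by
  unfold crossingIntegrand; fun_prop

theorem crossingIntegrand_pi_sub (l a b φ : ℝ) :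
    crossingIntegrand l a b (π - φ) = crossingIntegrand l a b φ := by
  simp only [crossingIntegrand, cos_pi_sub, sin_pi_sub, abs_neg]

section Factors

variable {l a b φ : ℝ}

theorem min_mul_abs_cos_eq_left (hl : 0 < l) (ha : 0 ≤ a) (hal : a ≤ l) (hφ₀ : 0 ≤ φ)
    (hφ : φ ≤ arccos (a / l)) : min a (l * |cos φ|) = a := by
  have hcos : a / l ≤ cos φ :=
    le_cos_of_le_arccos (by linarith [div_nonneg ha hl.le]) ((div_le_one hl).2 hal) hφ₀ hφ
  exact min_eq_left ((div_le_iff₀' hl).1 (hcos.trans (le_abs_self _)))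

theorem min_mul_abs_cos_eq_right (hl : 0 < l) (ha : 0 ≤ a) (hal : a ≤ l)
    (hφ : arccos (a / l) ≤ φ) (hφπ : φ ≤ π / 2) : min a (l * |cos φ|) = l * cos φ := by
  have hcos : cos φ ≤ a / l :=
    cos_le_of_arccos_le (by linarith [div_nonneg ha hl.le]) ((div_le_one hl).2 hal) hφ
      (by linarith [pi_pos])
  rw [abs_of_nonneg (cos_nonneg_of_mem_Icc ⟨by linarith [arccos_nonneg (a / l), pi_pos], hφπ⟩)]
  exact min_eq_right ((le_div_iff₀' hl).1 hcos)

theorem min_mul_sin_eq_right (hl : 0 < l) (hφ₀ : 0 ≤ φ) (hφ : φ ≤ arcsin (b / l)) :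
    min b (l * sin φ) = l * sin φ := by
  have hsin : sin φ ≤ b / l :=
    (le_arcsin_iff_sin_le' ⟨by linarith [pi_pos], hφ.trans (arcsin_le_pi_div_two _)⟩).1 hφ
  exact min_eq_right ((le_div_iff₀' hl).1 hsin)

theorem min_mul_sin_eq_left (hl : 0 < l) (hb : 0 ≤ b) (hbl : b ≤ l)
    (hφ : arcsin (b / l) ≤ φ) (hφπ : φ ≤ π / 2) : min b (l * sin φ) = b := by
  have hsin : b / l ≤ sin φ :=
    (arcsin_le_iff_le_sin ⟨by linarith [div_nonneg hb hl.le], (div_le_one hl).2 hbl⟩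
      ⟨(neg_pi_div_two_le_arcsin _).trans hφ, hφπ⟩).1 hφ
  exact min_eq_left ((div_le_iff₀' hl).1 hsin)

end Factors

theorem integral_crossingIntegrand_zero_pi_div_two {l a b : ℝ} (hl : 0 < l) (ha : 0 ≤ a)
    (hb : 0 ≤ b) (hab : a ^ 2 + b ^ 2 ≤ l ^ 2) :
    ∫ φ in 0..π / 2, crossingIntegrand l a b φ =
      a * l * (1 - cos (arcsin (b / l))) + a * b * (arccos (a / l) - arcsin (b / l))
        + l * b * (1 - sin (arccos (a / l))) := by
  set α := arcsin (b / l)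
  set β := arccos (a / l)
  have hal : a ≤ l := abs_le_of_sq_le_sq' (by linarith [sq_nonneg b]) hl.le |>.2
  have hbl : b ≤ l := abs_le_of_sq_le_sq' (by linarith [sq_nonneg a]) hl.le |>.2
  have hα₀ : 0 ≤ α := arcsin_nonneg.2 (div_nonneg hb hl.le)
  have hβπ : β ≤ π / 2 := arccos_le_pi_div_two.2 (div_nonneg ha hl.le)
  have hαβ : α ≤ β := arcsin_le_arccos_of_sq_add_sq_le (div_nonneg ha hl.le) (by
    rw [div_pow, div_pow, ← add_div, div_le_one (by positivity)]; exact hab)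
  have hint : ∀ u v, IntervalIntegrable (crossingIntegrand l a b) volume u v :=
    (continuous_crossingIntegrand l a b).intervalIntegrable
  have hfirst : ∫ φ in 0..α, crossingIntegrand l a b φ = a * l * (1 - cos α) := by
    rw [integral_congr (g := fun φ ↦ a * l * sin φ), intervalIntegral.integral_const_mul,
      integral_sin, cos_zero]
    intro φ hφ
    obtain ⟨hφ₀, hφ⟩ := uIcc_of_le hα₀ ▸ hφ
    simp only [crossingIntegrand, min_mul_abs_cos_eq_left hl ha hal hφ₀ (hφ.trans hαβ),
      min_mul_sin_eq_right hl hφ₀ hφ]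
    ring
  have hmiddle : ∫ φ in α..β, crossingIntegrand l a b φ = a * b * (β - α) := by
    rw [integral_congr (g := fun _ ↦ a * b), intervalIntegral.integral_const, smul_eq_mul,
      mul_comm]
    intro φ hφ
    obtain ⟨hαφ, hφβ⟩ := uIcc_of_le hαβ ▸ hφ
    simp only [crossingIntegrand, min_mul_abs_cos_eq_left hl ha hal (hα₀.trans hαφ) hφβ,
      min_mul_sin_eq_left hl hb hbl hαφ (hφβ.trans hβπ)]
  have hlast : ∫ φ in β..π / 2, crossingIntegrand l a b φ = l * b * (1 - sin β) := by
    rw [integral_congr (g := fun φ ↦ l * b * cos φ), intervalIntegral.integral_const_mul,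
      integral_cos, sin_pi_div_two]
    intro φ hφ
    obtain ⟨hβφ, hφπ⟩ := uIcc_of_le hβπ ▸ hφ
    simp only [crossingIntegrand, min_mul_abs_cos_eq_right hl ha hal hβφ hφπ,
      min_mul_sin_eq_left hl hb hbl (hαβ.trans hβφ) hφπ]
    ring
  rw [← integral_add_adjacent_intervals (hint 0 α) (hint α (π / 2)),
    ← integral_add_adjacent_intervals (hint α β) (hint β (π / 2)), hfirst, hmiddle, hlast,
    add_assoc]

theorem AB2_eq_two_mul_integral_crossingIntegrand (l a b : ℝ) :
    AB2 l a b = 2 * ∫ φ in 0..π / 2, crossingIntegrand l a b φ :=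
  integral_eq_two_mul_integral_half_of_symm
    ((continuous_crossingIntegrand l a b).intervalIntegrable 0 π) (crossingIntegrand_pi_sub l a b)

theorem stmt4 (l a b : ℝ) (hb : 0 < b) (hba : b ≤ a)
    (hLl : Real.sqrt (a ^ 2 + b ^ 2) < l) :
    AB2 l a b = 2 * l * a * (1 - Real.sqrt (1 - b ^ 2 / l ^ 2))
      + 2 * l * b * (1 - Real.sqrt (1 - a ^ 2 / l ^ 2))
      + 2 * a * b * (Real.arccos (a / l) - Real.arcsin (b / l)) := by
  have hl : 0 < l := (sqrt_nonneg _).trans_lt hLl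
  have hab : a ^ 2 + b ^ 2 ≤ l ^ 2 := ((sqrt_lt' hl).1 hLl).le
  rw [AB2_eq_two_mul_integral_crossingIntegrand,
    integral_crossingIntegrand_zero_pi_div_two hl (hb.le.trans hba) hb.le hab, cos_arcsin,
    sin_arccos, div_pow, div_pow]
  ring
end

section
/- For real numbers l, σ, a, b with 0 < σ < b ≤ a and b − σ < l ≤ a − σ, the spherocylinder intersection probability P(l,σ,a,b) equals (1/π)·(b−σ)²/(ab) + (2/π)·((a−σ)/a)·(l/b)·(1 − √(1 − (b−σ)²/l²)) + (2/π)·((a−σ)/a)·((b−σ)/b)·(π/2 − arcsin((b−σ)/l)) + (σ/a + σ/b − σ²/(ab)). -/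
open Real MeasureTheory Filter

/-!
In the regime `b - σ < l ≤ a - σ` the needle is never longer than the shifted spacing `a - σ`,
so `min (a - σ) (l |cos φ|) = l |cos φ|` throughout, and `A` and `AB` lose their first cutoff.
All three integrands are symmetric under `φ ↦ π - φ`, so it suffices to integrate over
`[0, π/2]`. There `min (b - σ) (l sin φ)` switches branches once, at `arcsin ((b - σ) / l)`,
which produces the `√` and `arcsin` terms of `B`, while the substitution `u = l sin φ` turns
`AB` into `2 ∫₀ˡ min (b - σ) u du`.
-/

open intervalIntegral

theorem integral_zero_pi_eq_two_mul_of_pi_sub {f : ℝ → ℝ} (hf : Continuous f)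
    (hsymm : ∀ x, f (π - x) = f x) :
    ∫ x in (0:ℝ)..π, f x = 2 * ∫ x in (0:ℝ)..π / 2, f x := by
  have hupper : ∫ x in π / 2..π, f x = ∫ x in (0:ℝ)..π / 2, f x := by
    calc ∫ x in π / 2..π, f x = ∫ x in π / 2..π, f (π - x) := by simp only [hsymm]
      _ = ∫ x in (0:ℝ)..π / 2, f x := by
        rw [integral_comp_sub_left, sub_self, sub_half]
  rw [← integral_add_adjacent_intervals (b := π / 2) (hf.intervalIntegrable _ _)
    (hf.intervalIntegrable _ _), hupper, two_mul]

theorem integral_abs_cos_zero_pi : ∫ φ in (0:ℝ)..π, |cos φ| = 2 := by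
  rw [integral_zero_pi_eq_two_mul_of_pi_sub continuous_cos.abs (by simp [cos_pi_sub]),
    integral_congr (g := cos), integral_cos]
  · simp
  · intro φ hφ
    rw [Set.uIcc_of_le (by positivity)] at hφ
    exact abs_of_nonneg (cos_nonneg_of_mem_Icc ⟨by linarith [hφ.1, pi_pos], hφ.2⟩)

theorem min_mul_abs_cos_of_le {l a : ℝ} (hl : 0 ≤ l) (hla : l ≤ a) (φ : ℝ) :
    min a (l * |cos φ|) = l * |cos φ| :=
  min_eq_right <| (mul_le_of_le_one_right hl (abs_cos_le_one φ)).trans hla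

theorem A2_of_le {l a : ℝ} (hl : 0 ≤ l) (hla : l ≤ a) : A2 l a = 2 * l := by
  simp only [A2, min_mul_abs_cos_of_le hl hla, intervalIntegral.integral_const_mul,
    integral_abs_cos_zero_pi]
  ring

theorem B2_of_le {l b : ℝ} (hb : 0 < b) (hbl : b ≤ l) :
    B2 l b = 2 * l * (1 - √(1 - b ^ 2 / l ^ 2)) + b * (π - 2 * arcsin (b / l)) := by
  have hl : 0 < l := hb.trans_le hbl
  set φ₀ := arcsin (b / l)
  have hφ₀ : 0 ≤ φ₀ := arcsin_nonneg.2 (by positivity)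
  have hφ₀_le : φ₀ ≤ π / 2 := arcsin_le_pi_div_two _
  have hsin : l * sin φ₀ = b := by
    rw [sin_arcsin (by linarith [div_pos hb hl]) ((div_le_one hl).2 hbl)]
    field_simp
  have hcont : Continuous fun φ => min b (l * sin φ) := by fun_prop
  have hlower : ∫ φ in (0:ℝ)..φ₀, min b (l * sin φ) = l * (1 - cos φ₀) := by
    rw [integral_congr (g := fun φ => l * sin φ), intervalIntegral.integral_const_mul,
      integral_sin, cos_zero]
    intro φ hφ
    rw [Set.uIcc_of_le hφ₀] at hφ
    refine min_eq_right (hsin ▸ mul_le_mul_of_nonneg_left ?_ hl.le)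
    exact sin_le_sin_of_le_of_le_pi_div_two (by linarith [hφ.1]) hφ₀_le hφ.2
  have hupper : ∫ φ in φ₀..π / 2, min b (l * sin φ) = b * (π / 2 - φ₀) := by
    rw [integral_congr (g := fun _ => b), intervalIntegral.integral_const, smul_eq_mul, mul_comm]
    intro φ hφ
    rw [Set.uIcc_of_le hφ₀_le] at hφ
    refine min_eq_left (hsin ▸ mul_le_mul_of_nonneg_left ?_ hl.le)
    exact sin_le_sin_of_le_of_le_pi_div_two (by linarith [pi_pos]) hφ.2 hφ.1
  rw [B2, integral_zero_pi_eq_two_mul_of_pi_sub hcont (by simp [sin_pi_sub]),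
    ← integral_add_adjacent_intervals (b := φ₀) (hcont.intervalIntegrable _ _)
      (hcont.intervalIntegrable _ _), hlower, hupper, cos_arcsin, div_pow]
  ring

theorem integral_min_const_id {b l : ℝ} (hb : 0 ≤ b) (hbl : b ≤ l) :
    ∫ u in (0:ℝ)..l, min b u = b * l - b ^ 2 / 2 := by
  have hcont : Continuous fun u : ℝ => min b u := by fun_prop
  have hlower : ∫ u in (0:ℝ)..b, min b u = b ^ 2 / 2 := by
    rw [integral_congr (g := fun u => u), integral_id]
    · ring
    · intro u hu
      rw [Set.uIcc_of_le hb] at hu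
      exact min_eq_right hu.2
  have hupper : ∫ u in b..l, min b u = b * (l - b) := by
    rw [integral_congr (g := fun _ => b), intervalIntegral.integral_const, smul_eq_mul, mul_comm]
    intro u hu
    rw [Set.uIcc_of_le hbl] at hu
    exact min_eq_left hu.1
  rw [← integral_add_adjacent_intervals (b := b) (hcont.intervalIntegrable _ _)
    (hcont.intervalIntegrable _ _), hlower, hupper]
  ring

theorem AB2_of_le {l a b : ℝ} (hb : 0 ≤ b) (hbl : b ≤ l) (hla : l ≤ a) :
    AB2 l a b = 2 * b * l - b ^ 2 := by
  have hcont : Continuous fun φ => l * |cos φ| * min b (l * sin φ) := by fun_prop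
  have hsubst : ∫ φ in (0:ℝ)..π / 2, l * |cos φ| * min b (l * sin φ)
      = ∫ u in (0:ℝ)..l, min b u := by
    have hchange := integral_comp_mul_deriv (a := 0) (b := π / 2) (g := fun u => min b u)
      (fun φ _ => (hasDerivAt_sin φ).const_mul l) (by fun_prop) (by fun_prop)
    simp only [Function.comp_def, sin_zero, sin_pi_div_two, mul_zero, mul_one] at hchange
    rw [← hchange]
    refine integral_congr fun φ hφ => ?_
    rw [Set.uIcc_of_le (by positivity)] at hφ
    rw [abs_of_nonneg (cos_nonneg_of_mem_Icc ⟨by linarith [hφ.1, pi_pos], hφ.2⟩)]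
    ring
  simp only [AB2, min_mul_abs_cos_of_le (hb.trans hbl) hla]
  rw [integral_zero_pi_eq_two_mul_of_pi_sub hcont (by simp [cos_pi_sub, sin_pi_sub]), hsubst,
    integral_min_const_id hb hbl]
  ring

theorem stmt10 (l σ a b : ℝ) (hσ : 0 < σ) (hσb : σ < b) (hba : b ≤ a)
    (hbl : b - σ < l) (hla : l ≤ a - σ) :
    P2sc l σ a b = 1 / π * ((b - σ) ^ 2 / (a * b))
      + 2 / π * ((a - σ) / a) * (l / b) * (1 - Real.sqrt (1 - (b - σ) ^ 2 / l ^ 2))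
      + 2 / π * ((a - σ) / a) * ((b - σ) / b) * (π / 2 - Real.arcsin ((b - σ) / l))
      + (σ / a + σ / b - σ ^ 2 / (a * b)) := by
  have hbσ : 0 < b - σ := by linarith
  have hl : 0 < l := hbσ.trans hbl
  have hb : 0 < b := hσ.trans hσb
  have ha : 0 < a := hb.trans_le hba
  have hπ := pi_pos
  rw [P2sc, A2_of_le hl.le hla, B2_of_le hbσ hbl.le, AB2_of_le hbσ.le hbl.le hla]
  field_simp
  ring
end
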